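/- arXiv:2210.07937 — 6 statements merged into one kernel-verified Lean document; each statement's English description precedes it below -/
import Mathlib

section
/- Let μ, γ, α, β, η, ω, θ, S, k₁, k₂ ∈ ℝ with D₁ = β + μ + η(1 + k₁) > 0, D₂ = μ + γ + α(1 + k₂) > 0 and μ + ω > 0, and set Rₑ = β·θ·S/(D₁·D₂). Let F = ![![0, θ·S, 0], ![0, 0, 0], ![0, 0, 0]] and V = ![![D₁, 0, 0], ![-β, D₂, 0], ![-η(1+k₁), -α(1+k₂), μ+ω]]. Then for every λ ∈ ℝ, det(F·V⁻¹ - λ·1) = λ²·(Rₑ - λ). -/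
open Matrix

/-! The next-generation matrix has the same characteristic determinant, up to the factor
`det V`, as the pencil `F - λ V`; since `F` has a single nonzero entry and `V` is lower
triangular, both determinants are products read off directly. -/

namespace Matrix

theorem det_mul_inv_sub_smul_one {K n : Type*} [Field K] [Fintype n] [DecidableEq n]
    (F V : Matrix n n K) (hV : V.det ≠ 0) (c : K) :
    (F * V⁻¹ - c • 1).det = (F - c • V).det / V.det := by
  have hfactor : F * V⁻¹ - c • 1 = (F - c • V) * V⁻¹ := by
    rw [sub_mul, smul_mul, mul_nonsing_inv V (isUnit_iff_ne_zero.mpr hV)]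
  rw [hfactor, det_mul, det_nonsing_inv, Ring.inverse_eq_inv', div_eq_mul_inv]

variable {R : Type*} [CommRing R]

theorem det_lowerTriangular_fin_three (a b c d e f : R) :
    !![a, 0, 0; b, c, 0; d, e, f].det = a * c * f := by
  simp [det_fin_three]

theorem det_single_sub_smul_lowerTriangular_fin_three (t a b c d e f x : R) :
    (!![0, t, 0; 0, 0, 0; 0, 0, 0] - x • !![a, 0, 0; b, c, 0; d, e, f]).det
      = -x ^ 2 * f * (x * a * c + t * b) := by
  rw [det_fin_three]
  simp only [Matrix.sub_apply, Matrix.smul_apply, of_apply, cons_val_zero, cons_val_one,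
    cons_val_two, head_cons, tail_cons, smul_eq_mul]
  ring

end Matrix

theorem next_generation_char_det_general (μ α β η ω θ S k₁ k₂ : ℝ)
    (D₁ D₂ : ℝ)
    (hD₁pos : 0 < D₁) (hD₂pos : 0 < D₂) (hμω : 0 < μ + ω)
    (Re : ℝ) (hRe : Re = β * θ * S / (D₁ * D₂))
    (F V : Matrix (Fin 3) (Fin 3) ℝ)
    (hF : F = !![0, θ * S, 0; 0, 0, 0; 0, 0, 0])
    (hV : V = !![D₁, 0, 0; -β, D₂, 0; -(η * (1 + k₁)), -(α * (1 + k₂)), μ + ω]) :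
    ∀ lam : ℝ, (F * V⁻¹ - lam • (1 : Matrix (Fin 3) (Fin 3) ℝ)).det
      = lam ^ 2 * (Re - lam) := by
  intro lam
  subst hF hV hRe
  have hdetV : D₁ * D₂ * (μ + ω) ≠ 0 := by positivity
  rw [det_mul_inv_sub_smul_one _ _ (by rwa [det_lowerTriangular_fin_three]),
    det_lowerTriangular_fin_three, det_single_sub_smul_lowerTriangular_fin_three]
  field_simp
  ring

/-- Characteristic determinant of the next-generation matrix:
`det (F·V⁻¹ - λ·1) = λ²·(Rₑ - λ)` where `Rₑ = β·θ·S/(D₁·D₂)`. -/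
theorem next_generation_char_det (μ γ α β η ω θ S k₁ k₂ : ℝ)
    (D₁ D₂ : ℝ) (hD₁ : D₁ = β + μ + η * (1 + k₁)) (hD₂ : D₂ = μ + γ + α * (1 + k₂))
    (hD₁pos : 0 < D₁) (hD₂pos : 0 < D₂) (hμω : 0 < μ + ω)
    (Re : ℝ) (hRe : Re = β * θ * S / (D₁ * D₂))
    (F V : Matrix (Fin 3) (Fin 3) ℝ)
    (hF : F = !![0, θ * S, 0; 0, 0, 0; 0, 0, 0])
    (hV : V = !![D₁, 0, 0; -β, D₂, 0; -(η * (1 + k₁)), -(α * (1 + k₂)), μ + ω]) :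
    ∀ lam : ℝ, (F * V⁻¹ - lam • (1 : Matrix (Fin 3) (Fin 3) ℝ)).det
      = lam ^ 2 * (Re - lam) :=
  next_generation_char_det_general μ α β η ω θ S k₁ k₂ D₁ D₂ hD₁pos hD₂pos hμω Re hRe F V hF hV
end

section
/- Let μ, γ, α, β, η, ω, θ, S, k₁, k₂ ∈ ℝ with D₁ = β + μ + η(1 + k₁) > 0, D₂ = μ + γ + α(1 + k₂) > 0 and μ + ω > 0, and set Rₑ = β·θ·S/(D₁·D₂). Let F = ![![0, θ·S, 0], ![0, 0, 0], ![0, 0, 0]] and V = ![![D₁, 0, 0], ![-β, D₂, 0], ![-η(1+k₁), -α(1+k₂), μ+ω]]. Then a nonzero real number λ is an eigenvalue of F·V⁻¹ (i.e., there exists a nonzero vector v with (F·V⁻¹)·v = λ·v) if and only if λ = Rₑ and Rₑ ≠ 0. -/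
/-!
Only the first row of `F` is nonzero, so the same holds for `F * V⁻¹`. A matrix supported on a
single row `i₀` has a nonzero eigenvalue `λ` only with an eigenvector supported at `i₀`, so its
only possible nonzero eigenvalue is the diagonal entry at `i₀`. Here that entry is
`θ S (V⁻¹)₁₀ = β θ S / (D₁ D₂)`, read off from the explicit inverse of the lower triangular
matrix `V`.
-/

open Matrix

theorem Matrix.exists_mulVec_eq_smul_iff_of_single_row {K ι : Type*} [Field K] [Fintype ι]
    [DecidableEq ι] {M : Matrix ι ι K} (i₀ : ι) (hM : ∀ i, i ≠ i₀ → ∀ j, M i j = 0)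
    {lam : K} (hlam : lam ≠ 0) :
    (∃ v : ι → K, v ≠ 0 ∧ M *ᵥ v = lam • v) ↔ lam = M i₀ i₀ := by
  constructor
  · rintro ⟨v, hv, hMv⟩
    have hsupp : ∀ i, i ≠ i₀ → v i = 0 := fun i hi => by
      have := congrFun hMv i
      simp only [mulVec, dotProduct, hM i hi, zero_mul, Finset.sum_const_zero, Pi.smul_apply,
        smul_eq_mul] at this
      exact (mul_eq_zero.mp this.symm).resolve_left hlam
    have hv₀ : v i₀ ≠ 0 := fun h => hv <| funext fun i => by
      by_cases hi : i = i₀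
      · rw [hi, h]; rfl
      · exact hsupp i hi
    have hrow := congrFun hMv i₀
    rw [mulVec, dotProduct, Finset.sum_eq_single i₀ (fun j _ hj => by rw [hsupp j hj, mul_zero])
      (by simp)] at hrow
    exact (mul_right_cancel₀ hv₀ hrow).symm
  · rintro rfl
    refine ⟨Pi.single i₀ 1, by simp, funext fun i => ?_⟩
    by_cases hi : i = i₀
    · subst hi; simp
    · simp [hM i hi, hi]

theorem Matrix.inv_lowerTriangular_fin_three {K : Type*} [Field K] {a b c d e f : K}
    (ha : a ≠ 0) (hb : b ≠ 0) (hc : c ≠ 0) :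
    (!![a, 0, 0; d, b, 0; e, f, c])⁻¹ =
      !![1 / a, 0, 0;
        -d / (a * b), 1 / b, 0;
        (d * f - b * e) / (a * b * c), -f / (b * c), 1 / c] := by
  refine inv_eq_right_inv ?_
  ext i j
  fin_cases i <;> fin_cases j <;> simp [mul_apply, Fin.sum_univ_three] <;> field_simp <;> ring

theorem next_generation_eigenvalue_general (μ α β η ω θ S k₁ k₂ : ℝ)
    (D₁ D₂ : ℝ)
    (hD₁pos : 0 < D₁) (hD₂pos : 0 < D₂) (hμω : 0 < μ + ω)
    (Re : ℝ) (hRe : Re = β * θ * S / (D₁ * D₂))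
    (F V : Matrix (Fin 3) (Fin 3) ℝ)
    (hF : F = !![0, θ * S, 0; 0, 0, 0; 0, 0, 0])
    (hV : V = !![D₁, 0, 0; -β, D₂, 0; -(η * (1 + k₁)), -(α * (1 + k₂)), μ + ω]) :
    ∀ lam : ℝ, lam ≠ 0 →
      ((∃ v : Fin 3 → ℝ, v ≠ 0 ∧ (F * V⁻¹).mulVec v = lam • v) ↔
        (lam = Re ∧ Re ≠ 0)) := by
  intro lam hlam
  have hNGM : F * V⁻¹ = !![Re, θ * S / D₂, 0; 0, 0, 0; 0, 0, 0] := by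
    rw [hF, hV, inv_lowerTriangular_fin_three hD₁pos.ne' hD₂pos.ne' hμω.ne', hRe]
    ext i j
    fin_cases i <;> fin_cases j <;> simp <;> field_simp
  have hrows : ∀ i : Fin 3, i ≠ 0 → ∀ j,
      (!![Re, θ * S / D₂, 0; 0, 0, 0; 0, 0, 0] : Matrix _ _ ℝ) i j = 0 := by
    intro i hi j
    fin_cases i <;> fin_cases j <;> simp at hi ⊢
  rw [hNGM, exists_mulVec_eq_smul_iff_of_single_row 0 hrows hlam]
  simp only [of_apply, cons_val', cons_val_zero, empty_val', cons_val_fin_one]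
  exact ⟨fun h => ⟨h, h ▸ hlam⟩, And.left⟩

/-- A nonzero real number `lam` is an eigenvalue of the next-generation matrix
`F·V⁻¹` if and only if `lam = Rₑ` and `Rₑ ≠ 0`. -/
theorem next_generation_eigenvalue (μ γ α β η ω θ S k₁ k₂ : ℝ)
    (D₁ D₂ : ℝ) (hD₁ : D₁ = β + μ + η * (1 + k₁)) (hD₂ : D₂ = μ + γ + α * (1 + k₂))
    (hD₁pos : 0 < D₁) (hD₂pos : 0 < D₂) (hμω : 0 < μ + ω)
    (Re : ℝ) (hRe : Re = β * θ * S / (D₁ * D₂))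
    (F V : Matrix (Fin 3) (Fin 3) ℝ)
    (hF : F = !![0, θ * S, 0; 0, 0, 0; 0, 0, 0])
    (hV : V = !![D₁, 0, 0; -β, D₂, 0; -(η * (1 + k₁)), -(α * (1 + k₂)), μ + ω]) :
    ∀ lam : ℝ, lam ≠ 0 →
      ((∃ v : Fin 3 → ℝ, v ≠ 0 ∧ (F * V⁻¹).mulVec v = lam • v) ↔
        (lam = Re ∧ Re ≠ 0)) :=
  next_generation_eigenvalue_general μ α β η ω θ S k₁ k₂ D₁ D₂ hD₁pos hD₂pos hμω Re hRe F V hF hV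
end

section
/- Let μ, υ, δ, ω, β, γ, α, η, ψ, k₁, k₂ ∈ ℝ with μ > 0, μ + υ > 0, μ + ω > 0, μ + δ > 0, and set D₁ = μ + β + η(1 + k₁), D₂ = μ + γ + α(1 + k₂). Let J be the 6×6 real Jacobian matrix J = ![![-(μ+υ),0,0,0,0,0], ![υ,-μ,0,-ψ,0,δ], ![0,0,-D₁,ψ,0,0], ![0,0,β,-D₂,0,0], ![0,0,η(1+k₁),α(1+k₂),-(μ+ω),0], ![0,0,0,0,ω,-(μ+δ)]]. Then 0 is an eigenvalue of J (i.e., det J = 0) if and only if ψ·β = D₁·D₂, i.e., if and only if the effective reproduction number Rₑ = ψβ/(D₁D₂) equals 1. -/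
/-!
Expanding along the `Q` row and then along the `S` column leaves the `(L, I, R, T)` block,
which is block lower triangular with diagonal blocks `!![-D₁, ψ; β, -D₂]` and
`!![-(μ + ω), 0; ω, -(μ + δ)]`. So `det J` is `(μ + υ) μ (μ + ω) (μ + δ) (D₁ D₂ - ψ β)`,
a positive multiple of `D₁ D₂ - ψ β`.
-/

open Matrix

namespace Matrix

variable {R : Type*} [CommRing R]

theorem det_succ_of_row_zero_eq_single {n : ℕ} (M : Matrix (Fin (n + 1)) (Fin (n + 1)) R)
    (h : ∀ j ≠ 0, M 0 j = 0) : M.det = M 0 0 * (M.submatrix Fin.succ Fin.succ).det := by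
  rw [det_succ_row_zero, Fin.sum_univ_succ, Finset.sum_eq_zero fun j _ => by
    rw [h j.succ j.succ_ne_zero, mul_zero, zero_mul]]
  simp

theorem det_succ_of_column_zero_eq_single {n : ℕ} (M : Matrix (Fin (n + 1)) (Fin (n + 1)) R)
    (h : ∀ i ≠ 0, M i 0 = 0) : M.det = M 0 0 * (M.submatrix Fin.succ Fin.succ).det := by
  rw [← det_transpose, det_succ_of_row_zero_eq_single _ h, ← transpose_submatrix, det_transpose,
    transpose_apply]

theorem det_fin_four_of_upper_right_eq_zero (a b c d p q r s w x y z : R) :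
    !![a, b, 0, 0; c, d, 0, 0; p, q, w, x; r, s, y, z].det = (a * d - b * c) * (w * z - x * y) := by
  have hblocks : !![a, b, 0, 0; c, d, 0, 0; p, q, w, x; r, s, y, z] =
      (fromBlocks !![a, b; c, d] 0 !![p, q; r, s] !![w, x; y, z]).reindex finSumFinEquiv
        finSumFinEquiv := by
    ext i j; fin_cases i <;> fin_cases j <;> rfl
  rw [hblocks, det_reindex_self, det_fromBlocks_zero₁₂, det_fin_two_of, det_fin_two_of]

theorem det_fin_six_of_jacobian_pattern (a b c d e f g h i j k l m n : R) :
    !![a, 0, 0, 0, 0, 0;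
       b, c, 0, d, 0, e;
       0, 0, f, g, 0, 0;
       0, 0, h, i, 0, 0;
       0, 0, j, k, l, 0;
       0, 0, 0, 0, m, n].det
      = a * c * l * n * (f * i - g * h) := by
  rw [det_succ_of_row_zero_eq_single _ (by simp [Fin.forall_fin_succ]),
    det_succ_of_column_zero_eq_single _ (by simp [Fin.forall_fin_succ])]
  have hminor : ((!![a, 0, 0, 0, 0, 0; b, c, 0, d, 0, e; 0, 0, f, g, 0, 0; 0, 0, h, i, 0, 0;
      0, 0, j, k, l, 0; 0, 0, 0, 0, m, n].submatrix Fin.succ Fin.succ).submatrix Fin.succ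
        Fin.succ) = !![f, g, 0, 0; h, i, 0, 0; j, k, l, 0; 0, 0, m, n] := by
    ext i j; fin_cases i <;> fin_cases j <;> rfl
  rw [hminor, det_fin_four_of_upper_right_eq_zero]
  simp only [of_apply, cons_val', cons_val_zero, cons_val_fin_one, submatrix_apply,
    Fin.succ_zero_eq_one, cons_val_one, zero_mul, sub_zero]
  ring

end Matrix

theorem jacobian_zero_eigenvalue_iff_general (μ υ δ ω β α η ψ k₁ k₂ : ℝ)
    (hμ : 0 < μ) (hμυ : 0 < μ + υ) (hμω : 0 < μ + ω) (hμδ : 0 < μ + δ)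
    (D₁ D₂ : ℝ)
    (J : Matrix (Fin 6) (Fin 6) ℝ)
    (hJ : J = !![-(μ + υ), 0, 0, 0, 0, 0;
                 υ, -μ, 0, -ψ, 0, δ;
                 0, 0, -D₁, ψ, 0, 0;
                 0, 0, β, -D₂, 0, 0;
                 0, 0, η * (1 + k₁), α * (1 + k₂), -(μ + ω), 0;
                 0, 0, 0, 0, ω, -(μ + δ)]) :
    J.det = 0 ↔ ψ * β = D₁ * D₂ := by
  have hdiag : -(μ + υ) * -μ * -(μ + ω) * -(μ + δ) ≠ 0 := by
    simp only [mul_neg, neg_mul, neg_neg]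
    positivity
  rw [hJ, det_fin_six_of_jacobian_pattern, mul_eq_zero_iff_left hdiag, neg_mul_neg, sub_eq_zero,
    eq_comm]

/-- The Jacobian of the gonorrhoea model at the disease-free equilibrium has a
zero eigenvalue (`det J = 0`) if and only if `ψ·β = D₁·D₂`, i.e. iff the
effective reproduction number `Rₑ = ψβ/(D₁D₂)` equals `1`. -/
theorem jacobian_zero_eigenvalue_iff (μ υ δ ω β γ α η ψ k₁ k₂ : ℝ)
    (hμ : 0 < μ) (hμυ : 0 < μ + υ) (hμω : 0 < μ + ω) (hμδ : 0 < μ + δ)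
    (D₁ D₂ : ℝ) (hD₁ : D₁ = μ + β + η * (1 + k₁)) (hD₂ : D₂ = μ + γ + α * (1 + k₂))
    (J : Matrix (Fin 6) (Fin 6) ℝ)
    (hJ : J = !![-(μ + υ), 0, 0, 0, 0, 0;
                 υ, -μ, 0, -ψ, 0, δ;
                 0, 0, -D₁, ψ, 0, 0;
                 0, 0, β, -D₂, 0, 0;
                 0, 0, η * (1 + k₁), α * (1 + k₂), -(μ + ω), 0;
                 0, 0, 0, 0, ω, -(μ + δ)]) :
    J.det = 0 ↔ ψ * β = D₁ * D₂ :=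
  jacobian_zero_eigenvalue_iff_general μ υ δ ω β α η ψ k₁ k₂ hμ hμυ hμω hμδ D₁ D₂ J hJ
end

section
/- Let μ, υ, δ, ω, β, γ, α, η, ψ, k₁, k₂ ∈ ℝ and set D₁ = μ + β + η(1 + k₁), D₂ = μ + γ + α(1 + k₂). Let J be the 6×6 real matrix J = ![![-(μ+υ),0,0,0,0,0], ![υ,-μ,0,-ψ,0,δ], ![0,0,-D₁,ψ,0,0], ![0,0,β,-D₂,0,0], ![0,0,η(1+k₁),α(1+k₂),-(μ+ω),0], ![0,0,0,0,ω,-(μ+δ)]]. Then the characteristic polynomial of J factors as charpoly J = (X + C(μ+υ))·(X + C μ)·(X + C(μ+ω))·(X + C(μ+δ))·(X² + C(D₁+D₂)·X + C(D₁·D₂ - ψ·β)), where C denotes the constant-polynomial embedding ℝ → ℝ[X]. -/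
/-!
Listing the compartments in the order `S, T, R, {L, I}, Q` makes the Jacobian upper block
triangular, so its characteristic polynomial is the product of those of its diagonal blocks:
four linear factors from the `1 × 1` blocks, and `X² - tr X + det` of the `2 × 2` infection
block `{L, I}`.
-/

open Matrix Polynomial

namespace Matrix

variable {n α R : Type*} [Fintype n] [DecidableEq n] [DecidableEq α] [CommRing R]

theorem charpoly_toSquareBlock_of_forall_iff_eq (M : Matrix n n R) {b : n → α} {a : α} {i : n}
    (h : ∀ k, b k = a ↔ k = i) :
    (M.toSquareBlock b a).charpoly = X - C (M i i) := by
  have : Unique {k // b k = a} :=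
    { default := ⟨i, (h i).2 rfl⟩, uniq := fun k => Subtype.ext ((h k).1 k.2) }
  have hi : ((default : {k // b k = a}) : n) = i := (h _).1 (default : {k // b k = a}).2
  simp [charpoly, det_unique, toSquareBlock_def, hi]

def blockEquivFinTwo {b : n → α} {a : α} {i j : n} (hij : i ≠ j)
    (h : ∀ k, b k = a ↔ k = i ∨ k = j) : Fin 2 ≃ {k // b k = a} where
  toFun := ![⟨i, (h i).2 (.inl rfl)⟩, ⟨j, (h j).2 (.inr rfl)⟩]
  invFun k := if k.1 = i then 0 else 1
  left_inv k := by fin_cases k <;> simp [hij.symm]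
  right_inv k := by
    rcases (h k).1 k.2 with hk | hk <;> ext <;> simp [hk, hij.symm]

theorem charpoly_toSquareBlock_of_forall_iff_eq_or_eq [Nontrivial R] (M : Matrix n n R)
    {b : n → α} {a : α} {i j : n} (hij : i ≠ j) (h : ∀ k, b k = a ↔ k = i ∨ k = j) :
    (M.toSquareBlock b a).charpoly =
      X ^ 2 - C (M i i + M j j) * X + C (M i i * M j j - M i j * M j i) := by
  rw [← charpoly_reindex (blockEquivFinTwo hij h).symm, charpoly_fin_two, trace_fin_two,
    det_fin_two]
  simp [blockEquivFinTwo, toSquareBlock_def]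

end Matrix

def compartmentBlock : Fin 6 → Fin 5 := ![4, 0, 3, 3, 2, 1]

theorem jacobian_charpoly_factorization_general (μ υ δ ω β α η ψ k₁ k₂ : ℝ)
    (D₁ D₂ : ℝ)
    (J : Matrix (Fin 6) (Fin 6) ℝ)
    (hJ : J = !![-(μ + υ), 0, 0, 0, 0, 0;
                 υ, -μ, 0, -ψ, 0, δ;
                 0, 0, -D₁, ψ, 0, 0;
                 0, 0, β, -D₂, 0, 0;
                 0, 0, η * (1 + k₁), α * (1 + k₂), -(μ + ω), 0;
                 0, 0, 0, 0, ω, -(μ + δ)]) :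
    J.charpoly = (X + C (μ + υ)) * (X + C μ) * (X + C (μ + ω)) * (X + C (μ + δ)) *
      (X ^ 2 + C (D₁ + D₂) * X + C (D₁ * D₂ - ψ * β)) := by
  have hblock : J.BlockTriangular compartmentBlock := by
    intro i j hij
    fin_cases i <;> fin_cases j <;> simp_all [compartmentBlock]
  have himage : Finset.univ.image compartmentBlock = Finset.univ := by decide
  rw [hblock.charpoly, himage, Fin.prod_univ_five,
    charpoly_toSquareBlock_of_forall_iff_eq _ (i := 1) (by decide),
    charpoly_toSquareBlock_of_forall_iff_eq _ (i := 5) (by decide),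
    charpoly_toSquareBlock_of_forall_iff_eq _ (i := 4) (by decide),
    charpoly_toSquareBlock_of_forall_iff_eq_or_eq _ (i := 2) (j := 3) (by decide) (by decide),
    charpoly_toSquareBlock_of_forall_iff_eq _ (i := 0) (by decide)]
  subst hJ
  simp only [of_apply, cons_val', cons_val_one, cons_val_zero, cons_val_fin_one, cons_val,
    map_neg, map_add, map_sub, map_mul]
  ring

/-- Factorization of the characteristic polynomial of the Jacobian of the
gonorrhoea model with controls at the disease-free equilibrium. -/
theorem jacobian_charpoly_factorization (μ υ δ ω β γ α η ψ k₁ k₂ : ℝ)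
    (D₁ D₂ : ℝ) (hD₁ : D₁ = μ + β + η * (1 + k₁)) (hD₂ : D₂ = μ + γ + α * (1 + k₂))
    (J : Matrix (Fin 6) (Fin 6) ℝ)
    (hJ : J = !![-(μ + υ), 0, 0, 0, 0, 0;
                 υ, -μ, 0, -ψ, 0, δ;
                 0, 0, -D₁, ψ, 0, 0;
                 0, 0, β, -D₂, 0, 0;
                 0, 0, η * (1 + k₁), α * (1 + k₂), -(μ + ω), 0;
                 0, 0, 0, 0, ω, -(μ + δ)]) :
    J.charpoly = (X + C (μ + υ)) * (X + C μ) * (X + C (μ + ω)) * (X + C (μ + δ)) *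
      (X ^ 2 + C (D₁ + D₂) * X + C (D₁ * D₂ - ψ * β)) :=
  jacobian_charpoly_factorization_general μ υ δ ω β α η ψ k₁ k₂ D₁ D₂ J hJ
end

section
/- Let μ, υ, δ, ω, β, γ, α, η, ψ, k₁, k₂ ∈ ℝ with μ > 0, μ + υ > 0, μ + ω > 0, μ + δ > 0, D₁ = μ + β + η(1 + k₁) > 0, D₂ = μ + γ + α(1 + k₂) > 0, and suppose ψ·β < D₁·D₂ (i.e., effective reproduction number Rₑ = ψβ/(D₁D₂) < 1). Let J be the 6×6 real matrix J = ![![-(μ+υ),0,0,0,0,0], ![υ,-μ,0,-ψ,0,δ], ![0,0,-D₁,ψ,0,0], ![0,0,β,-D₂,0,0], ![0,0,η(1+k₁),α(1+k₂),-(μ+ω),0], ![0,0,0,0,ω,-(μ+δ)]]. Then every complex eigenvalue z of J (i.e., every root z ∈ ℂ of the characteristic polynomial of J) satisfies Re z < 0. -/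
/-!
Reordering the compartments as (L, I, Q, R, T, S) makes the Jacobian lower triangular apart
from the 2 × 2 block `[[-D₁, ψ], [β, -D₂]]` of the infected compartments. Hence the
characteristic polynomial is `(X + μ + υ)(X + μ)(X + μ + ω)(X + μ + δ)` times
`(X + D₁)(X + D₂) - ψβ`, and a root of the quadratic with nonnegative real part would be real
(its imaginary part is killed by `2 Re z + D₁ + D₂ > 0`) and then satisfy
`(z + D₁)(z + D₂) ≥ D₁D₂ > ψβ`.
-/

open Matrix Polynomial

theorem Complex.re_neg_of_add_ofReal_eq_zero {a : ℝ} (ha : 0 < a) {z : ℂ} (h : z + a = 0) :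
    z.re < 0 := by
  have hre : z.re + a = 0 := by simpa using congrArg Complex.re h
  linarith

theorem Complex.re_neg_of_add_mul_add_sub_eq_zero {c d p : ℝ} (hc : 0 < c) (hd : 0 < d)
    (hp : p < c * d) {z : ℂ} (h : (z + c) * (z + d) - p = 0) : z.re < 0 := by
  have hre : (z.re + c) * (z.re + d) - z.im * z.im = p := by
    simpa [sub_eq_zero] using congrArg Complex.re h
  have him : z.im * (2 * z.re + c + d) = 0 := by
    have := congrArg Complex.im h
    simp only [mul_im, add_re, add_im, ofReal_re, ofReal_im, sub_im, zero_im] at this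
    linear_combination this
  by_contra! hx
  have hy : z.im = 0 := (mul_eq_zero.mp him).resolve_right (by linarith)
  rw [hy] at hre
  nlinarith

theorem charpoly_dfe_jacobian (a b c d e f υ δ ψ β η α ω : ℝ) :
    (!![-a, 0, 0, 0, 0, 0;
         υ, -b, 0, -ψ, 0, δ;
         0, 0, -c, ψ, 0, 0;
         0, 0, β, -d, 0, 0;
         0, 0, η, α, -e, 0;
         0, 0, 0, 0, ω, -f] : Matrix (Fin 6) (Fin 6) ℝ).charpoly =
      (X + C a) * (X + C b) * (X + C e) * (X + C f) * ((X + C c) * (X + C d) - C (ψ * β)) := by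
  have hcharmatrix : charmatrix (!![-a, 0, 0, 0, 0, 0;
         υ, -b, 0, -ψ, 0, δ;
         0, 0, -c, ψ, 0, 0;
         0, 0, β, -d, 0, 0;
         0, 0, η, α, -e, 0;
         0, 0, 0, 0, ω, -f] : Matrix (Fin 6) (Fin 6) ℝ) =
      !![X + C a, 0, 0, 0, 0, 0;
         -C υ, X + C b, 0, C ψ, 0, -C δ;
         0, 0, X + C c, -C ψ, 0, 0;
         0, 0, -C β, X + C d, 0, 0;
         0, 0, -C η, -C α, X + C e, 0;
         0, 0, 0, 0, -C ω, X + C f] := by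
    ext i j
    fin_cases i <;> fin_cases j <;> simp [sub_eq_add_neg]
  rw [Matrix.charpoly, hcharmatrix]
  eval_det
  simp only [map_mul]
  ring

theorem dfe_locally_asymptotically_stable_general (μ υ δ ω β α η ψ k₁ k₂ : ℝ)
    (hμ : 0 < μ) (hμυ : 0 < μ + υ) (hμω : 0 < μ + ω) (hμδ : 0 < μ + δ)
    (D₁ D₂ : ℝ)
    (hD₁pos : 0 < D₁) (hD₂pos : 0 < D₂) (hR : ψ * β < D₁ * D₂)
    (J : Matrix (Fin 6) (Fin 6) ℝ)
    (hJ : J = !![-(μ + υ), 0, 0, 0, 0, 0;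
                 υ, -μ, 0, -ψ, 0, δ;
                 0, 0, -D₁, ψ, 0, 0;
                 0, 0, β, -D₂, 0, 0;
                 0, 0, η * (1 + k₁), α * (1 + k₂), -(μ + ω), 0;
                 0, 0, 0, 0, ω, -(μ + δ)]) :
    ∀ z : ℂ, aeval z J.charpoly = 0 → z.re < 0 := by
  intro z hz
  rw [hJ, charpoly_dfe_jacobian] at hz
  simp only [map_mul, map_sub, map_add, aeval_X, aeval_C, Complex.coe_algebraMap,
    mul_eq_zero] at hz
  rcases hz with ((((hQ | hS) | hRc) | hT) | hLI)
  · exact Complex.re_neg_of_add_ofReal_eq_zero hμυ (by exact_mod_cast hQ)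
  · exact Complex.re_neg_of_add_ofReal_eq_zero hμ hS
  · exact Complex.re_neg_of_add_ofReal_eq_zero hμω (by exact_mod_cast hRc)
  · exact Complex.re_neg_of_add_ofReal_eq_zero hμδ (by exact_mod_cast hT)
  · exact Complex.re_neg_of_add_mul_add_sub_eq_zero hD₁pos hD₂pos hR (by exact_mod_cast hLI)

/-- Local asymptotic stability of the disease-free equilibrium: if `Rₑ < 1`
(i.e. `ψ·β < D₁·D₂`) then every complex eigenvalue of the Jacobian `J` has
strictly negative real part. -/
theorem dfe_locally_asymptotically_stable (μ υ δ ω β γ α η ψ k₁ k₂ : ℝ)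
    (hμ : 0 < μ) (hμυ : 0 < μ + υ) (hμω : 0 < μ + ω) (hμδ : 0 < μ + δ)
    (D₁ D₂ : ℝ) (hD₁ : D₁ = μ + β + η * (1 + k₁)) (hD₂ : D₂ = μ + γ + α * (1 + k₂))
    (hD₁pos : 0 < D₁) (hD₂pos : 0 < D₂) (hR : ψ * β < D₁ * D₂)
    (J : Matrix (Fin 6) (Fin 6) ℝ)
    (hJ : J = !![-(μ + υ), 0, 0, 0, 0, 0;
                 υ, -μ, 0, -ψ, 0, δ;
                 0, 0, -D₁, ψ, 0, 0;
                 0, 0, β, -D₂, 0, 0;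
                 0, 0, η * (1 + k₁), α * (1 + k₂), -(μ + ω), 0;
                 0, 0, 0, 0, ω, -(μ + δ)]) :
    ∀ z : ℂ, aeval z J.charpoly = 0 → z.re < 0 :=
  dfe_locally_asymptotically_stable_general μ υ δ ω β α η ψ k₁ k₂ hμ hμυ hμω hμδ D₁ D₂ hD₁pos hD₂pos
    hR J hJ
end

section
/- Let μ, υ, δ, ω, β, γ, α, η, ψ, k₁, k₂ ∈ ℝ with D₁ = μ + β + η(1 + k₁) > 0, D₂ = μ + γ + α(1 + k₂) > 0, and suppose ψ·β > D₁·D₂ (i.e., effective reproduction number Rₑ = ψβ/(D₁D₂) > 1). Let J be the 6×6 real matrix J = ![![-(μ+υ),0,0,0,0,0], ![υ,-μ,0,-ψ,0,δ], ![0,0,-D₁,ψ,0,0], ![0,0,β,-D₂,0,0], ![0,0,η(1+k₁),α(1+k₂),-(μ+ω),0], ![0,0,0,0,ω,-(μ+δ)]]. Then J has a strictly positive real eigenvalue, namely a real root λ > 0 of λ² + (D₁+D₂)·λ + (D₁·D₂ - ψ·β) = 0. -/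
/-!
Let `λ > 0` be the positive root of `λ² + (D₁+D₂)λ + (D₁D₂ - ψβ)`, which exists because the
constant term is negative. The rows of `L` and `I` of `J` vanish outside the columns of `L` and
`I`, so the row vector `(0, 0, β, D₁ + λ, 0, 0)` is a left eigenvector of `J` for `λ`; hence
`det (J - λ) = 0` and `λ` has a (right) eigenvector as well.
-/

open Matrix

theorem exists_pos_root_of_const_neg {b c : ℝ} (hc : c < 0) :
    ∃ x : ℝ, 0 < x ∧ x ^ 2 + b * x + c = 0 := by
  have hdisc : 0 ≤ b ^ 2 - 4 * c := by nlinarith [sq_nonneg b]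
  set s := √(b ^ 2 - 4 * c)
  have hs : s ^ 2 = b ^ 2 - 4 * c := Real.sq_sqrt hdisc
  have hbs : b < s := by nlinarith [Real.sqrt_nonneg (b ^ 2 - 4 * c)]
  exact ⟨(-b + s) / 2, by linarith, by linear_combination hs / 4⟩

theorem Matrix.exists_mulVec_eq_smul_of_vecMul_eq_smul {n R : Type*} [Fintype n] [DecidableEq n]
    [CommRing R] [IsDomain R] {A : Matrix n n R} {w : n → R} {c : R}
    (hw : w ≠ 0) (hwA : w ᵥ* A = c • w) : ∃ v ≠ 0, A *ᵥ v = c • v := by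
  have hdet : (A - c • 1).det = 0 :=
    exists_vecMul_eq_zero_iff.mp
      ⟨w, hw, by rw [vecMul_sub, hwA, vecMul_smul, vecMul_one, sub_self]⟩
  obtain ⟨v, hv, hAv⟩ := exists_mulVec_eq_zero_iff.mpr hdet
  exact ⟨v, hv, by rwa [sub_mulVec, smul_mulVec, one_mulVec, sub_eq_zero] at hAv⟩

theorem dfe_unstable_of_Re_gt_one_general (μ υ δ ω β α η ψ k₁ k₂ : ℝ)
    (D₁ D₂ : ℝ)
    (hD₁pos : 0 < D₁) (hR : D₁ * D₂ < ψ * β)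
    (J : Matrix (Fin 6) (Fin 6) ℝ)
    (hJ : J = !![-(μ + υ), 0, 0, 0, 0, 0;
                 υ, -μ, 0, -ψ, 0, δ;
                 0, 0, -D₁, ψ, 0, 0;
                 0, 0, β, -D₂, 0, 0;
                 0, 0, η * (1 + k₁), α * (1 + k₂), -(μ + ω), 0;
                 0, 0, 0, 0, ω, -(μ + δ)]) :
    ∃ lam : ℝ, 0 < lam ∧
      lam ^ 2 + (D₁ + D₂) * lam + (D₁ * D₂ - ψ * β) = 0 ∧
      ∃ v : Fin 6 → ℝ, v ≠ 0 ∧ J.mulVec v = lam • v := by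
  obtain ⟨lam, hlam, hroot⟩ :=
    exists_pos_root_of_const_neg (b := D₁ + D₂) (c := D₁ * D₂ - ψ * β) (by linarith)
  refine ⟨lam, hlam, hroot, ?_⟩
  set w : Fin 6 → ℝ := ![0, 0, β, D₁ + lam, 0, 0]
  have hw : w ≠ 0 := fun h => by
    have h3 : D₁ + lam = 0 := congr_fun h 3
    linarith
  have hwJ : w ᵥ* J = lam • w := by
    subst hJ
    ext i
    fin_cases i <;> simp [w, vecMul, dotProduct, Fin.sum_univ_succ]
    · ring
    · linear_combination -hroot
  simpa only [exists_prop] using exists_mulVec_eq_smul_of_vecMul_eq_smul hw hwJ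

/-- Instability of the disease-free equilibrium when `Rₑ > 1`: if
`ψ·β > D₁·D₂` then the Jacobian `J` has a strictly positive real eigenvalue,
namely a positive real root of `λ² + (D₁+D₂)λ + (D₁D₂ - ψβ) = 0`. -/
theorem dfe_unstable_of_Re_gt_one (μ υ δ ω β γ α η ψ k₁ k₂ : ℝ)
    (D₁ D₂ : ℝ) (hD₁ : D₁ = μ + β + η * (1 + k₁)) (hD₂ : D₂ = μ + γ + α * (1 + k₂))
    (hD₁pos : 0 < D₁) (hD₂pos : 0 < D₂) (hR : D₁ * D₂ < ψ * β)
    (J : Matrix (Fin 6) (Fin 6) ℝ)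
    (hJ : J = !![-(μ + υ), 0, 0, 0, 0, 0;
                 υ, -μ, 0, -ψ, 0, δ;
                 0, 0, -D₁, ψ, 0, 0;
                 0, 0, β, -D₂, 0, 0;
                 0, 0, η * (1 + k₁), α * (1 + k₂), -(μ + ω), 0;
                 0, 0, 0, 0, ω, -(μ + δ)]) :
    ∃ lam : ℝ, 0 < lam ∧
      lam ^ 2 + (D₁ + D₂) * lam + (D₁ * D₂ - ψ * β) = 0 ∧
      ∃ v : Fin 6 → ℝ, v ≠ 0 ∧ J.mulVec v = lam • v :=
  dfe_unstable_of_Re_gt_one_general μ υ δ ω β α η ψ k₁ k₂ D₁ D₂ hD₁pos hR J hJ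
end
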